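/- Suppose (H₀) holds, h is a Bregman function with zone C, f is convex and C¹ with locally Lipschitz gradient, the minimizer of f over cl F is unique, say S(P) = {a}, and the growth condition holds: there are α > 0, β ≥ 1 and a neighborhood U_a of a with f(x) − f(a) ≥ α D_h(a, x)^β for all x ∈ U_a ∩ cl C where D_h(a,·) is defined. Let x : [0, ∞) → F be the global solution of the steepest descent equation ẋ(t) = −∇²h(x(t))⁻¹[I − Aᵀ(A∇²h(x(t))⁻¹Aᵀ)⁻¹A∇²h(x(t))⁻¹]∇f(x(t)). Then: if β = 1 there exists K > 0 such that D_h(a, x(t)) ≤ K e^{−αt} for all t > 0; if β > 1 there exists K' > 0 such that D_h(a, x(t)) ≤ K'/t^{1/(β−1)} for all t > 0. -/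

import Mathlib

noncomputable section
open Set Filter Topology Matrix MeasureTheory

abbrev E (n : ℕ) := EuclideanSpace ℝ (Fin n)

/-- Action of a matrix on a vector of `EuclideanSpace ℝ (Fin n)`. -/
def matVec {n : ℕ} (M : Matrix (Fin n) (Fin n) ℝ) (v : E n) : E n := WithLp.toLp 2 (M.mulVec v)

/-- The continuous linear map on Euclidean space associated with a matrix. -/
def matCLM {n : ℕ} (M : Matrix (Fin n) (Fin n) ℝ) : E n →L[ℝ] E n :=
  LinearMap.toContinuousLinearMap (Matrix.toEuclideanLin M)

/-- The steepest descent vector field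
`x ↦ −H(x)⁻¹[I − Aᵀ(A H(x)⁻¹ Aᵀ)⁻¹ A H(x)⁻¹] g(x)` for the Hessian metric. -/
def sdVF {n m : ℕ} (A : Matrix (Fin m) (Fin n) ℝ)
    (Hess : E n → Matrix (Fin n) (Fin n) ℝ) (g : E n → E n) (x : E n) : E n :=
  -(matVec ((Hess x)⁻¹ * (1 - Aᵀ * (A * (Hess x)⁻¹ * Aᵀ)⁻¹ * A * (Hess x)⁻¹)) (g x))

/-- The `D`-function (Bregman distance) of `h`: `D_h(a,y) = h(a) − h(y) − ⟨∇h(y), a − y⟩`. -/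
def Dh {n : ℕ} (h : E n → ℝ) (a y : E n) : ℝ :=
  h a - h y - (inner ℝ (gradient h y) (a - y) : ℝ)

/-!
Along the trajectory, `D(t) = D_h(a, x(t))` is a Lyapunov function: the steepest descent
direction `v` satisfies `∇²h(x) v = -P ∇f(x)` with `P ∇f(x) - ∇f(x) ∈ range Aᵀ ⊥ ker A`, so
`D'(t) = ⟪∇f(x), a - x⟫ ≤ f(a) - f(x) ≤ 0` by convexity of `f`. Since `D ≥ 0`, `f(x(t))`
approaches `min f` along a sequence of times; the bounded level sets of `D_h(a, ·)` give a
cluster point, which is the unique minimizer `a`, so `D(t) → 0`. Strict convexity of `h`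
then forces `x(t) → a`, hence eventually `D' ≤ -α D^β` by the growth condition, and
integrating this differential inequality gives the exponential (`β = 1`) and the
power (`β > 1`) rates.
-/

theorem tendsto_nhdsWithin_of_forall_seq {X Y : Type*} [TopologicalSpace X]
    [FirstCountableTopology X] [TopologicalSpace Y] {s : Set X} {g : X → Y} {x : X} {y : Y}
    (hg : ∀ u : ℕ → X, (∀ j, u j ∈ s) → Tendsto u atTop (𝓝 x) → Tendsto (g ∘ u) atTop (𝓝 y)) :
    Tendsto g (𝓝[s] x) (𝓝 y) := by
  rw [nhdsWithin, ← Subtype.range_coe (s := s), ← map_comap, tendsto_map'_iff,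
    tendsto_iff_seq_tendsto]
  exact fun u hu => hg (Subtype.val ∘ u) (fun j => (u j).2) (tendsto_comap_iff.1 hu)

theorem tendsto_of_isMinOn_unique {X ι : Type*} [TopologicalSpace X] {K S : Set X} {f : X → ℝ}
    {a : X} (hK : IsCompact K) (hS : IsClosed S) (hf : Continuous f)
    (hmin : {z ∈ S | ∀ w ∈ S, f z ≤ f w} = {a}) {l : Filter ι} {y : ι → X}
    (hy : ∀ᶠ i in l, y i ∈ K ∩ S) (hfy : Tendsto (fun i => f (y i)) l (𝓝 (f a))) :
    Tendsto y l (𝓝 a) := by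
  have haS : a ∈ {z ∈ S | ∀ w ∈ S, f z ≤ f w} := hmin ▸ rfl
  refine (hK.inter_right hS).tendsto_nhds_of_unique_mapClusterPt hy fun z hz hzy => ?_
  obtain ⟨U, hUl, hUz⟩ := mapClusterPt_iff_ultrafilter.1 hzy
  have hfz : f z = f a :=
    tendsto_nhds_unique ((hf.tendsto z).comp hUz) (hfy.mono_left hUl)
  rw [← mem_singleton_iff, ← hmin]
  exact ⟨hz.2, fun w hw => hfz ▸ haS.2 w hw⟩

section Convexity

variable {F : Type*} [NormedAddCommGroup F] [InnerProductSpace ℝ F] [CompleteSpace F]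

theorem ConvexOn.add_inner_gradient_le {s : Set F} {φ : F → ℝ} (hφ : ConvexOn ℝ s φ)
    {p q : F} (hp : p ∈ s) (hq : q ∈ s) (hdiff : DifferentiableAt ℝ φ p) :
    φ p + inner ℝ (gradient φ p) (q - p) ≤ φ q := by
  have hline : ConvexOn ℝ (Icc (0 : ℝ) 1) (φ ∘ AffineMap.lineMap p q) :=
    (hφ.comp_affineMap _).subset (fun t ht => hφ.1.lineMap_mem hp hq ht) (convex_Icc 0 1)
  have hderiv : HasDerivAt (φ ∘ AffineMap.lineMap (k := ℝ) p q)
      (inner ℝ (gradient φ p) (q - p)) 0 := by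
    have hφp := hdiff.hasGradientAt.hasFDerivAt
    rw [← AffineMap.lineMap_apply_zero (k := ℝ) p q] at hφp
    simpa using hφp.comp_hasDerivAt 0 AffineMap.hasDerivAt_lineMap
  have := hline.le_slope_of_hasDerivAt (left_mem_Icc.2 zero_le_one) (right_mem_Icc.2 zero_le_one)
    zero_lt_one hderiv
  simp only [slope_def_field, Function.comp_apply, AffineMap.lineMap_apply_zero,
    AffineMap.lineMap_apply_one, sub_zero, div_one] at this
  linarith

end Convexity

section Bregman

variable {n : ℕ} {h : E n → ℝ} {s C : Set (E n)} {a z : E n}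

theorem Dh_nonneg (hh : ConvexOn ℝ s h) (ha : a ∈ s) {y : E n} (hy : y ∈ s)
    (hdiff : DifferentiableAt ℝ h y) : 0 ≤ Dh h a y := by
  have := hh.add_inner_gradient_le hy ha hdiff
  unfold Dh
  linarith

theorem eq_of_tendsto_Dh_zero {ι : Type*} {l : Filter ι} [l.NeBot] (hh : StrictConvexOn ℝ s h)
    (hz : z ∈ s) (ha : a ∈ s) {y : ι → E n}
    (hy : ∀ᶠ i in l, y i ∈ s ∧ DifferentiableAt ℝ h (y i))
    (hDz : Tendsto (fun i => Dh h z (y i)) l (𝓝 0))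
    (hDa : Tendsto (fun i => Dh h a (y i)) l (𝓝 0)) : z = a := by
  by_contra hne
  set w : E n := (1 / 2 : ℝ) • z + (1 / 2 : ℝ) • a
  have hw : w ∈ s := hh.1 hz ha (by norm_num) (by norm_num) (by norm_num)
  have hlt : h w < (h z + h a) / 2 := by
    have := hh.2 hz ha hne (by norm_num : (0:ℝ) < 1 / 2) (by norm_num : (0:ℝ) < 1 / 2) (by norm_num)
    simp only [smul_eq_mul] at this
    linarith
  -- the left side is exactly `h (y i) + ⟪∇h (y i), w - y i⟫`
  have hle : ∀ᶠ i in l, (h z + h a) / 2 - (Dh h z (y i) + Dh h a (y i)) / 2 ≤ h w := by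
    filter_upwards [hy] with i ⟨hys, hyd⟩
    have hgrad := hh.convexOn.add_inner_gradient_le hys hw hyd
    have hsplit : w - y i = (1 / 2 : ℝ) • (z - y i) + (1 / 2 : ℝ) • (a - y i) := by module
    rw [hsplit, inner_add_right, real_inner_smul_right, real_inner_smul_right] at hgrad
    unfold Dh
    linarith
  have hlim : Tendsto (fun i => (h z + h a) / 2 - (Dh h z (y i) + Dh h a (y i)) / 2) l
      (𝓝 ((h z + h a) / 2)) := by
    simpa using tendsto_const_nhds.sub ((hDz.add hDa).div_const 2)
  exact hlt.not_ge (le_of_tendsto hlim hle)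

theorem tendsto_nhds_of_tendsto_Dh_zero {ι : Type*} {l : Filter ι}
    (hh : StrictConvexOn ℝ (closure C) h) (hdiff : ∀ p ∈ C, DifferentiableAt ℝ h p)
    (hBlim : ∀ z ∈ closure C, Tendsto (Dh h z) (𝓝[C] z) (𝓝 0))
    (ha : a ∈ closure C) (hlevel : Bornology.IsBounded {p ∈ C | Dh h a p ≤ 1})
    {y : ι → E n} (hyC : ∀ᶠ i in l, y i ∈ C) (hD : Tendsto (fun i => Dh h a (y i)) l (𝓝 0)) :
    Tendsto y l (𝓝 a) := by
  refine hlevel.isCompact_closure.tendsto_nhds_of_unique_mapClusterPt ?_ fun z hz hzy => ?_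
  · filter_upwards [hyC, hD.eventually (gt_mem_nhds one_pos)] with i hiC hiD
    exact subset_closure ⟨hiC, hiD.le⟩
  obtain ⟨U, hUl, hUz⟩ := mapClusterPt_iff_ultrafilter.1 hzy
  have hzC : z ∈ closure C := closure_mono (sep_subset _ _) hz
  have hUC : ∀ᶠ i in (U : Filter ι), y i ∈ C := hUl hyC
  exact eq_of_tendsto_Dh_zero hh hzC ha (hUC.mono fun i hi => ⟨subset_closure hi, hdiff _ hi⟩)
    ((hBlim z hzC).comp (tendsto_nhdsWithin_iff.2 ⟨hUz, hUC⟩)) (hD.mono_left hUl)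

theorem hasDerivAt_Dh_comp {v : E n} {x : ℝ → E n} {t : ℝ}
    {H : E n →L[ℝ] E n} (hh : DifferentiableAt ℝ h (x t))
    (hH : HasFDerivAt (gradient h) H (x t)) (hx : HasDerivAt x v t) :
    HasDerivAt (fun s => Dh h a (x s)) (inner ℝ (H v) (x t - a)) t := by
  have hhx : HasDerivAt (fun s => h (x s)) (inner ℝ (gradient h (x t)) v) t := by
    have := hh.hasGradientAt.hasFDerivAt.comp_hasDerivAt t hx
    rwa [InnerProductSpace.toDual_apply_apply] at this
  have hgx := (hH.comp_hasDerivAt t hx).inner ℝ (hx.const_sub a)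
  refine ((hhx.const_sub (h a)).sub hgx).congr_deriv ?_
  rw [Function.comp_apply, inner_neg_right, ← neg_sub (x t) a, inner_neg_right]
  ring

end Bregman

theorem inner_matVec_sdVF {n m : ℕ} (A : Matrix (Fin m) (Fin n) ℝ)
    (Hess : E n → Matrix (Fin n) (Fin n) ℝ) (g : E n → E n) {p a : E n}
    (hA : A *ᵥ a.ofLp = A *ᵥ p.ofLp) (hdet : IsUnit (Hess p).det) :
    inner ℝ (matVec (Hess p) (sdVF A Hess g p)) (p - a) = inner ℝ (g p) (a - p) := by
  set N := (A * (Hess p)⁻¹ * Aᵀ)⁻¹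
  have hker : A *ᵥ (p - a).ofLp = 0 := by simp [Matrix.mulVec_sub, hA]
  have hHv : (matVec (Hess p) (sdVF A Hess g p)).ofLp
      = -((g p).ofLp - Aᵀ *ᵥ ((N * A * (Hess p)⁻¹) *ᵥ (g p).ofLp)) := by
    simp only [matVec, sdVF, N, WithLp.ofLp_toLp, WithLp.ofLp_neg, Matrix.mulVec_neg,
      Matrix.mulVec_mulVec, ← Matrix.mul_assoc, Matrix.mul_nonsing_inv _ hdet, Matrix.one_mul,
      Matrix.sub_mulVec, Matrix.one_mulVec]
  have horth : (p - a).ofLp ⬝ᵥ (Aᵀ *ᵥ ((N * A * (Hess p)⁻¹) *ᵥ (g p).ofLp)) = 0 := by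
    rw [Matrix.mulVec_transpose, dotProduct_comm, ← Matrix.dotProduct_mulVec, hker,
      dotProduct_zero]
  rw [EuclideanSpace.inner_eq_star_dotProduct, EuclideanSpace.inner_eq_star_dotProduct, hHv,
    star_trivial, star_trivial, dotProduct_neg, dotProduct_sub, horth, sub_zero,
    ← neg_dotProduct, ← WithLp.ofLp_neg, neg_sub]

theorem hasDerivAt_Dh_sdVF {n m : ℕ} {h : E n → ℝ} (A : Matrix (Fin m) (Fin n) ℝ)
    (Hess : E n → Matrix (Fin n) (Fin n) ℝ) (g : E n → E n) {a : E n} {x : ℝ → E n} {t : ℝ}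
    (hh : DifferentiableAt ℝ h (x t)) (hH : HasFDerivAt (gradient h) (matCLM (Hess (x t))) (x t))
    (hx : HasDerivAt x (sdVF A Hess g (x t)) t) (hA : A *ᵥ a.ofLp = A *ᵥ (x t).ofLp)
    (hdet : IsUnit (Hess (x t)).det) :
    HasDerivAt (fun s => Dh h a (x s)) (inner ℝ (g (x t)) (a - x t)) t := by
  have hHv : matCLM (Hess (x t)) (sdVF A Hess g (x t))
      = matVec (Hess (x t)) (sdVF A Hess g (x t)) := rfl
  have := hasDerivAt_Dh_comp (a := a) hh hH hx
  rwa [hHv, inner_matVec_sdVF A Hess g hA hdet] at this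

section Decay

variable {D d : ℝ → ℝ}

theorem Convex.antitoneOn_of_hasDerivAt_nonpos {s : Set ℝ} (hs : Convex ℝ s)
    (hD : ∀ t ∈ s, HasDerivAt D (d t) t) (hd : ∀ t ∈ interior s, d t ≤ 0) : AntitoneOn D s :=
  antitoneOn_of_hasDerivWithinAt_nonpos hs (fun t ht => (hD t ht).continuousAt.continuousWithinAt)
    (fun t ht => (hD t (interior_subset ht)).hasDerivWithinAt) hd

theorem Convex.monotoneOn_of_hasDerivAt_nonneg {s : Set ℝ} (hs : Convex ℝ s)
    (hD : ∀ t ∈ s, HasDerivAt D (d t) t) (hd : ∀ t ∈ interior s, 0 ≤ d t) : MonotoneOn D s :=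
  monotoneOn_of_hasDerivWithinAt_nonneg hs (fun t ht => (hD t ht).continuousAt.continuousWithinAt)
    (fun t ht => (hD t (interior_subset ht)).hasDerivWithinAt) hd

theorem exists_seq_tendsto_zero_of_hasDerivAt_le {e : ℝ → ℝ}
    (hD : ∀ t ∈ Ici 0, HasDerivAt D (d t) t) (hD0 : ∀ t ∈ Ici 0, 0 ≤ D t)
    (hd : ∀ t ∈ Ici 0, d t ≤ -e t) (he : ∀ t ∈ Ici 0, 0 ≤ e t) :
    ∃ ts : ℕ → ℝ, (∀ j : ℕ, (j : ℝ) ≤ ts j) ∧ Tendsto (fun j => e (ts j)) atTop (𝓝 0) := by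
  have hsmall : ∀ ε > 0, ∀ T ≥ (0 : ℝ), ∃ t ≥ T, e t < ε := by
    intro ε hε T hT
    -- otherwise `D t + ε t` is nonincreasing, so `D` would become negative
    by_contra! hbig
    have hanti : AntitoneOn (fun s => D s + ε * s) (Ici T) := by
      refine (convex_Ici T).antitoneOn_of_hasDerivAt_nonpos
        (fun t ht => (hD t (hT.trans ht)).add ((hasDerivAt_id t).const_mul ε)) fun t ht => ?_
      rw [interior_Ici] at ht
      linarith [hd t (hT.trans ht.le), hbig t ht.le]
    set t := T + D T / ε + 1
    have hTt : T ≤ t := by have := div_nonneg (hD0 T hT) hε.le; linarith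
    have := hanti self_mem_Ici hTt hTt
    have : ε * (D T / ε) = D T := mul_div_cancel₀ _ hε.ne'
    nlinarith [hD0 t (hT.trans hTt)]
  choose ts hts hets using fun j : ℕ => hsmall (1 / (j + 1)) Nat.one_div_pos_of_nat j j.cast_nonneg
  refine ⟨ts, hts, squeeze_zero (fun j => he _ (j.cast_nonneg.trans (hts j)))
    (fun j => (hets j).le) tendsto_one_div_add_atTop_nhds_zero_nat⟩

theorem AntitoneOn.tendsto_atTop_of_tendsto_comp {ts : ℕ → ℝ} {c L : ℝ}
    (hanti : AntitoneOn D (Ici c)) (hts : Tendsto ts atTop atTop)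
    (hDts : Tendsto (fun j => D (ts j)) atTop (𝓝 L)) : Tendsto D atTop (𝓝 L) := by
  have hge : ∀ t ∈ Ici c, L ≤ D t := fun t ht =>
    le_of_tendsto hDts ((hts.eventually_ge_atTop t).mono fun j hj => hanti ht (ht.trans hj) hj)
  refine tendsto_order.2 ⟨fun l hl => ?_, fun u hu => ?_⟩
  · filter_upwards [eventually_ge_atTop c] with t ht using hl.trans_le (hge t ht)
  · obtain ⟨j, hju, hjc⟩ := ((hDts.eventually (gt_mem_nhds hu)).and
      (hts.eventually_ge_atTop c)).exists
    filter_upwards [eventually_ge_atTop (ts j)] with t ht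
    exact (hanti hjc (hjc.trans ht) ht).trans_lt hju

theorem exists_exp_bound_of_hasDerivAt_le {α : ℝ} (hα : 0 ≤ α)
    (hD : ∀ t ∈ Ici 0, HasDerivAt D (d t) t) (hanti : AntitoneOn D (Ici 0)) (hD0 : 0 ≤ D 0)
    (hdec : ∀ᶠ t in atTop, d t ≤ -α * D t) :
    ∃ K > 0, ∀ t : ℝ, 0 < t → D t ≤ K * Real.exp (-α * t) := by
  obtain ⟨T, hT⟩ := eventually_atTop.1 hdec
  set T₀ := max T 0
  have hbound : ∀ t ∈ Ici 0, D t ≤ D 0 * Real.exp (α * T₀) * Real.exp (-α * t) := by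
    intro t ht
    rw [mul_assoc, ← Real.exp_add]
    rcases lt_or_ge t T₀ with htT | hTt
    · calc D t ≤ D 0 := hanti self_mem_Ici ht ht
        _ ≤ D 0 * Real.exp (α * T₀ + -α * t) :=
          le_mul_of_one_le_right hD0 (Real.one_le_exp (by nlinarith))
    · have hgron := le_gronwallBound_of_liminf_deriv_right_le (f := D) (f' := d) (δ := D T₀)
        (K := -α) (ε := 0) (a := T₀) (b := t)
        (fun s hs => (hD s (le_max_right T 0 |>.trans hs.1)).continuousAt.continuousWithinAt)
        (fun s hs _ hr => (hD s (le_max_right T 0 |>.trans hs.1)).hasDerivWithinAt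
          |>.liminf_right_slope_le hr)
        le_rfl (fun s hs => by simpa using hT s (le_max_left T 0 |>.trans hs.1))
        t ⟨hTt, le_rfl⟩
      rw [gronwallBound_ε0] at hgron
      calc D t ≤ D T₀ * Real.exp (-α * (t - T₀)) := hgron
        _ ≤ D 0 * Real.exp (-α * (t - T₀)) := by
          gcongr; exact hanti self_mem_Ici (le_max_right T 0) (le_max_right T 0)
        _ = D 0 * Real.exp (α * T₀ + -α * t) := by ring_nf
  refine ⟨(D 0 + 1) * Real.exp (α * T₀), by positivity, fun t ht => ?_⟩
  calc D t ≤ D 0 * Real.exp (α * T₀) * Real.exp (-α * t) := hbound t ht.le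
    _ ≤ (D 0 + 1) * Real.exp (α * T₀) * Real.exp (-α * t) := by gcongr; linarith

/-- `D ^ (1 - β) - α (β - 1) t` is nondecreasing, since its derivative is
`(1 - β) D ^ (-β) D' - α (β - 1) ≥ 0`. -/
theorem le_rpow_of_hasDerivAt_le_neg_mul_rpow {α β T t : ℝ} (hα : 0 < α) (hβ : 1 < β)
    (hTt : T < t) (hD : ∀ s ∈ Icc T t, HasDerivAt D (d s) s) (hpos : ∀ s ∈ Icc T t, 0 < D s)
    (hdec : ∀ s ∈ Icc T t, d s ≤ -α * D s ^ β) :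
    D t ≤ (α * (β - 1) * (t - T)) ^ (-(1 / (β - 1))) := by
  have hmono : MonotoneOn (fun s => D s ^ (1 - β) - α * (β - 1) * s) (Icc T t) := by
    refine (convex_Icc T t).monotoneOn_of_hasDerivAt_nonneg (fun s hs =>
      ((hD s hs).rpow_const (Or.inl (hpos s hs).ne')).sub ((hasDerivAt_id s).const_mul _))
      fun s hs => ?_
    have hs' := interior_subset hs
    have hDs := hpos s hs'
    have hinv : D s ^ β * D s ^ (1 - β - 1) = 1 := by
      rw [← Real.rpow_add hDs]; norm_num
    have := mul_le_mul_of_nonneg_right (mul_le_mul_of_nonpos_right (hdec s hs')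
      (by linarith : 1 - β ≤ 0)) (Real.rpow_nonneg hDs.le (1 - β - 1))
    have hcancel : -α * D s ^ β * (1 - β) * D s ^ (1 - β - 1) = α * (β - 1) := by
      linear_combination (-α * (1 - β)) * hinv
    linarith
  have hgrow : α * (β - 1) * (t - T) ≤ D t ^ (1 - β) := by
    have hΦ := hmono (left_mem_Icc.2 hTt.le) (right_mem_Icc.2 hTt.le) hTt.le
    have hT := Real.rpow_pos_of_pos (hpos T (left_mem_Icc.2 hTt.le)) (1 - β)
    dsimp only at hΦ
    linarith
  have hexp : (1 - β) * -(1 / (β - 1)) = 1 := by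
    have : β - 1 ≠ 0 := by linarith
    field_simp
    ring
  calc D t = (D t ^ (1 - β)) ^ (-(1 / (β - 1))) := by
        rw [← Real.rpow_mul (hpos t (right_mem_Icc.2 hTt.le)).le, hexp, Real.rpow_one]
    _ ≤ (α * (β - 1) * (t - T)) ^ (-(1 / (β - 1))) :=
        Real.rpow_le_rpow_of_nonpos (by have := sub_pos.2 hβ; positivity) hgrow
          (by have := sub_pos.2 hβ; rw [neg_nonpos]; positivity)

theorem exists_rpow_bound_of_hasDerivAt_le {α β : ℝ} (hα : 0 < α) (hβ : 1 < β)
    (hD : ∀ t ∈ Ici 0, HasDerivAt D (d t) t) (hanti : AntitoneOn D (Ici 0))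
    (hD0 : ∀ t ∈ Ici 0, 0 ≤ D t) (hdec : ∀ᶠ t in atTop, d t ≤ -α * D t ^ β) :
    ∃ K' > 0, ∀ t : ℝ, 0 < t → D t ≤ K' / t ^ (1 / (β - 1)) := by
  obtain ⟨T, hT⟩ := eventually_atTop.1 hdec
  set T₀ := max T 1
  have hT₀ : 0 < T₀ := zero_lt_one.trans_le (le_max_right T 1)
  set q := 1 / (β - 1)
  have hq : 0 < q := one_div_pos.2 (sub_pos.2 hβ)
  set c := (α * (β - 1) / 2) ^ (-q)
  have hc : 0 < c := Real.rpow_pos_of_pos (by have := sub_pos.2 hβ; positivity) _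
  have hK' : c ≤ c + D 0 * (2 * T₀) ^ q :=
    le_add_of_nonneg_right (mul_nonneg (hD0 0 self_mem_Ici) (by positivity))
  refine ⟨c + D 0 * (2 * T₀) ^ q, hc.trans_le hK', fun t ht => ?_⟩
  rw [le_div_iff₀ (Real.rpow_pos_of_pos ht q)]
  rcases lt_or_ge t (2 * T₀) with hsmall | hlarge
  · calc D t * t ^ q ≤ D 0 * (2 * T₀) ^ q :=
          mul_le_mul (hanti self_mem_Ici ht.le ht.le) (Real.rpow_le_rpow ht.le hsmall.le hq.le)
            (Real.rpow_nonneg ht.le q) (hD0 0 self_mem_Ici)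
      _ ≤ c + D 0 * (2 * T₀) ^ q := le_add_of_nonneg_left hc.le
  rcases (hD0 t ht.le).eq_or_lt with hzero | hpos
  · rw [← hzero, zero_mul]; exact hc.le.trans hK'
  have hT₀t : T₀ < t := by linarith
  have hIcc : ∀ s ∈ Icc T₀ t, 0 ≤ s := fun s hs => hT₀.le.trans hs.1
  have hdecay := le_rpow_of_hasDerivAt_le_neg_mul_rpow hα hβ hT₀t
    (fun s hs => hD s (hIcc s hs))
    (fun s hs => hpos.trans_le (hanti (hIcc s hs) ht.le hs.2))
    (fun s hs => hT s ((le_max_left T 1).trans hs.1))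
  have hβ' := sub_pos.2 hβ
  calc D t * t ^ q ≤ (α * (β - 1) * (t - T₀)) ^ (-q) * t ^ q := by gcongr
    _ ≤ (α * (β - 1) / 2 * t) ^ (-q) * t ^ q := by
        have hhalf : α * (β - 1) / 2 * t ≤ α * (β - 1) * (t - T₀) := by
          nlinarith [mul_nonneg (mul_pos hα hβ').le (sub_nonneg.2 hlarge)]
        gcongr ?_ * _
        exact Real.rpow_le_rpow_of_nonpos (by positivity) hhalf (by linarith)
    _ = c := by
        rw [Real.mul_rpow (by positivity) ht.le, mul_assoc, Real.rpow_neg ht.le,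
          inv_mul_cancel₀ (Real.rpow_pos_of_pos ht q).ne', mul_one]
    _ ≤ c + D 0 * (2 * T₀) ^ q := hK'

end Decay

theorem tendsto_Dh_atTop_zero {n : ℕ} {h f : E n → ℝ} {C S : Set (E n)} {a : E n}
    {x : ℝ → E n} {d : ℝ → ℝ} (hS : IsClosed S) (hf : Continuous f)
    (hSP : {z ∈ S | ∀ w ∈ S, f z ≤ f w} = {a})
    (hlevel : Bornology.IsBounded {p ∈ C | Dh h a p ≤ Dh h a (x 0)})
    (hBlim : Tendsto (Dh h a) (𝓝[C] a) (𝓝 0)) (hx : ∀ t ∈ Ici 0, x t ∈ C ∩ S)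
    (hD : ∀ t ∈ Ici 0, HasDerivAt (fun s => Dh h a (x s)) (d t) t)
    (hd : ∀ t ∈ Ici 0, d t ≤ -(f (x t) - f a)) (hD0 : ∀ t ∈ Ici 0, 0 ≤ Dh h a (x t))
    (hanti : AntitoneOn (fun t => Dh h a (x t)) (Ici 0)) :
    Tendsto (fun t => Dh h a (x t)) atTop (𝓝 0) := by
  have haS : a ∈ {z ∈ S | ∀ w ∈ S, f z ≤ f w} := hSP ▸ rfl
  obtain ⟨ts, hts, hfts⟩ := exists_seq_tendsto_zero_of_hasDerivAt_le hD hD0 hd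
    fun t ht => sub_nonneg.2 (haS.2 _ (hx t ht).2)
  have hts0 : ∀ j : ℕ, ts j ∈ Ici 0 := fun j => j.cast_nonneg.trans (hts j)
  have hxts : Tendsto (fun j => x (ts j)) atTop (𝓝 a) :=
    tendsto_of_isMinOn_unique hlevel.isCompact_closure hS hf hSP
      (Eventually.of_forall fun j => ⟨subset_closure ⟨(hx _ (hts0 j)).1,
        hanti self_mem_Ici (hts0 j) (hts0 j)⟩, (hx _ (hts0 j)).2⟩)
      (by simpa using hfts.add_const (f a))
  exact hanti.tendsto_atTop_of_tendsto_comp (tendsto_atTop_mono hts tendsto_natCast_atTop_atTop)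
    (hBlim.comp (tendsto_nhdsWithin_iff.2
      ⟨hxts, Eventually.of_forall fun j => (hx _ (hts0 j)).1⟩))

theorem stmt12_general
    -- problem data: a full rank `m×n` matrix `A` (`m < n`), `b ∈ ℝᵐ`
    {n m : ℕ}
    (A : Matrix (Fin m) (Fin n) ℝ) (b : Fin m → ℝ)
    -- `C` is a nonempty open convex set, `F = C ∩ {x | Ax = b}` is nonempty
    (C : Set (E n)) (hCopen : IsOpen C)
    (h : E n → ℝ) (Hess : E n → Matrix (Fin n) (Fin n) ℝ)
    -- `(H₀)`: `h` is of Legendre type with `int dom h = C`: it is strictly convex on `C`,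
    -- `C²` on `C`, and its gradient blows up at the boundary of `C`;
    -- its Hessian `Hess` is positive definite and locally Lipschitz on `C`
    (hhC2 : ContDiffOn ℝ 2 h C)
    (hHess : ∀ x ∈ C, HasFDerivAt (gradient h) (matCLM (Hess x)) x)
    (hHpos : ∀ x ∈ C, (Hess x).PosDef)
    -- `f` is `C¹` with locally Lipschitz gradient
    (f : E n → ℝ) (hf : ContDiff ℝ 1 f)
    -- `h` is a Bregman function with zone `C`
    (hBstrict : StrictConvexOn ℝ (closure C) h)
    (hBlevel : ∀ a ∈ closure C, ∀ γ : ℝ, Bornology.IsBounded {y ∈ C | Dh h a y ≤ γ})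
    (hBlim : ∀ y ∈ closure C, ∀ yseq : ℕ → E n, (∀ j, yseq j ∈ C) →
      Tendsto yseq atTop (𝓝 y) → Tendsto (fun j => Dh h y (yseq j)) atTop (𝓝 0))
    -- `f` is convex and has the unique minimizer `a` over `cl F`
    (hfconv : ConvexOn ℝ univ f)
    (a : E n)
    (hSP : {z ∈ closure (C ∩ {w | A.mulVec w = b}) |
      ∀ w ∈ closure (C ∩ {w | A.mulVec w = b}), f z ≤ f w} = {a})
    -- the growth condition `(GC)`
    (α β : ℝ) (hα : 0 < α) (U : Set (E n)) (hU : U ∈ 𝓝 a)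
    (hGC : ∀ z ∈ U ∩ C, f z - f a ≥ α * (Dh h a z) ^ β)
    -- the global trajectory
    (x : ℝ → E n)
    (hmem : ∀ t ∈ Ici (0:ℝ), x t ∈ C ∩ {z | A.mulVec z = b})
    (hode : ∀ t ∈ Ici (0:ℝ), HasDerivAt x (sdVF A Hess (gradient f) (x t)) t) :
    (β = 1 → ∃ K > (0:ℝ), ∀ t : ℝ, 0 < t → Dh h a (x t) ≤ K * Real.exp (-α * t)) ∧
    (1 < β → ∃ K' > (0:ℝ), ∀ t : ℝ, 0 < t → Dh h a (x t) ≤ K' / t ^ (1 / (β - 1))) := by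
  set F := C ∩ {z : E n | A.mulVec z = b}
  have haS : a ∈ {z ∈ closure F | ∀ w ∈ closure F, f z ≤ f w} := hSP ▸ rfl
  have haC : a ∈ closure C := closure_mono inter_subset_left haS.1
  have hAa : A *ᵥ a.ofLp = b :=
    closure_minimal (t := {z : E n | A *ᵥ z.ofLp = b}) inter_subset_right
      (isClosed_eq (by fun_prop) continuous_const) haS.1
  have hdiff : ∀ p ∈ C, DifferentiableAt ℝ h p := fun p hp =>
    (hhC2.differentiableOn two_ne_zero).differentiableAt (hCopen.mem_nhds hp)
  have hBlim' : ∀ z ∈ closure C, Tendsto (Dh h z) (𝓝[C] z) (𝓝 0) := fun z hz =>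
    tendsto_nhdsWithin_of_forall_seq (hBlim z hz)
  have hD : ∀ t ∈ Ici 0, HasDerivAt (fun s => Dh h a (x s))
      (inner ℝ (gradient f (x t)) (a - x t)) t := fun t ht =>
    hasDerivAt_Dh_sdVF A Hess (gradient f) (hdiff _ (hmem t ht).1) (hHess _ (hmem t ht).1)
      (hode t ht) (hAa.trans (hmem t ht).2.symm) (hHpos _ (hmem t ht).1).det_pos.ne'.isUnit
  have hd : ∀ t ∈ Ici 0, inner ℝ (gradient f (x t)) (a - x t) ≤ -(f (x t) - f a) := fun t _ => by
    linarith [hfconv.add_inner_gradient_le (mem_univ (x t)) (mem_univ a)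
      (hf.differentiable one_ne_zero (x t))]
  have hD0 : ∀ t ∈ Ici 0, 0 ≤ Dh h a (x t) := fun t ht =>
    Dh_nonneg hBstrict.convexOn haC (subset_closure (hmem t ht).1) (hdiff _ (hmem t ht).1)
  have hanti : AntitoneOn (fun t => Dh h a (x t)) (Ici 0) :=
    (convex_Ici 0).antitoneOn_of_hasDerivAt_nonpos hD fun t ht => by
      linarith [hd t (interior_subset ht), haS.2 _ (subset_closure (hmem t (interior_subset ht)))]
  have hDlim := tendsto_Dh_atTop_zero isClosed_closure hf.continuous hSP (hBlevel a haC _)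
    (hBlim' a haC) (fun t ht => ⟨(hmem t ht).1, subset_closure (hmem t ht)⟩) hD hd hD0 hanti
  have hxlim : Tendsto x atTop (𝓝 a) := tendsto_nhds_of_tendsto_Dh_zero hBstrict hdiff hBlim' haC
    (hBlevel a haC 1) ((eventually_ge_atTop 0).mono fun t ht => (hmem t ht).1) hDlim
  have hdec : ∀ᶠ t in atTop, inner ℝ (gradient f (x t)) (a - x t) ≤ -α * Dh h a (x t) ^ β := by
    filter_upwards [hxlim hU, eventually_ge_atTop 0] with t hxU ht
    linarith [hGC _ ⟨hxU, (hmem t ht).1⟩, hd t ht]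
  refine ⟨fun hβ1 => ?_, fun hβ1 => exists_rpow_bound_of_hasDerivAt_le hα hβ1 hD hanti hD0 hdec⟩
  subst hβ1
  exact exists_exp_bound_of_hasDerivAt_le hα.le hD hanti (hD0 0 self_mem_Ici)
    (by simpa using hdec)

/-- rate of convergence, Proposition `P:rate1`.  Suppose `h` is a
Bregman function with zone `C`, `f` is convex with unique minimizer `a` over `cl F`, and
the growth condition `f(x) − f(a) ≥ α D_h(a,x)^β` holds near `a`.  Then along the global
steepest descent trajectory, `D_h(a,x(t)) ≤ K e^{−αt}` if `β = 1`, and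
`D_h(a,x(t)) ≤ K'/t^{1/(β−1)}` if `β > 1`. -/
theorem stmt12
    -- problem data: a full rank `m×n` matrix `A` (`m < n`), `b ∈ ℝᵐ`
    {n m : ℕ} (hm : 0 < m) (hmn : m < n)
    (A : Matrix (Fin m) (Fin n) ℝ) (b : Fin m → ℝ) (hrank : A.rank = m)
    -- `C` is a nonempty open convex set, `F = C ∩ {x | Ax = b}` is nonempty
    (C : Set (E n)) (hCopen : IsOpen C) (hCconv : Convex ℝ C) (hCne : C.Nonempty)
    (hFne : (C ∩ {x | A.mulVec x = b}).Nonempty)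
    (h : E n → ℝ) (Hess : E n → Matrix (Fin n) (Fin n) ℝ)
    -- `(H₀)`: `h` is of Legendre type with `int dom h = C`: it is strictly convex on `C`,
    -- `C²` on `C`, and its gradient blows up at the boundary of `C`;
    -- its Hessian `Hess` is positive definite and locally Lipschitz on `C`
    (hhC2 : ContDiffOn ℝ 2 h C) (hhconv : ConvexOn ℝ C h) (hhstrict : StrictConvexOn ℝ C h)
    (hLeg : ∀ (z : ℕ → E n) (x' : E n), (∀ j, z j ∈ C) → x' ∈ frontier C →
      Tendsto z atTop (𝓝 x') → Tendsto (fun j => ‖gradient h (z j)‖) atTop atTop)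
    (hHess : ∀ x ∈ C, HasFDerivAt (gradient h) (matCLM (Hess x)) x)
    (hHpos : ∀ x ∈ C, (Hess x).PosDef)
    (hHlip : ∀ x ∈ C, ∃ ε > 0, ∃ K : ℝ, ∀ y ∈ C ∩ Metric.ball x ε, ∀ z ∈ C ∩ Metric.ball x ε,
      ‖matCLM (Hess y) - matCLM (Hess z)‖ ≤ K * ‖y - z‖)
    -- `f` is `C¹` with locally Lipschitz gradient
    (f : E n → ℝ) (hf : ContDiff ℝ 1 f)
    (hfgrad : ∀ x : E n, ∃ ε > 0, ∃ K : ℝ, ∀ y ∈ Metric.ball x ε, ∀ z ∈ Metric.ball x ε,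
      ‖gradient f y - gradient f z‖ ≤ K * ‖y - z‖)
    -- `h` is a Bregman function with zone `C`
    (hBcont : ContinuousOn h (closure C)) (hBstrict : StrictConvexOn ℝ (closure C) h)
    (hBlevel : ∀ a ∈ closure C, ∀ γ : ℝ, Bornology.IsBounded {y ∈ C | Dh h a y ≤ γ})
    (hBlim : ∀ y ∈ closure C, ∀ yseq : ℕ → E n, (∀ j, yseq j ∈ C) →
      Tendsto yseq atTop (𝓝 y) → Tendsto (fun j => Dh h y (yseq j)) atTop (𝓝 0))
    -- `f` is convex and has the unique minimizer `a` over `cl F`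
    (hfconv : ConvexOn ℝ univ f)
    (a : E n)
    (hSP : {z ∈ closure (C ∩ {w | A.mulVec w = b}) |
      ∀ w ∈ closure (C ∩ {w | A.mulVec w = b}), f z ≤ f w} = {a})
    -- the growth condition `(GC)`
    (α β : ℝ) (hα : 0 < α) (hβ : 1 ≤ β) (U : Set (E n)) (hU : U ∈ 𝓝 a)
    (hGC : ∀ z ∈ U ∩ C, f z - f a ≥ α * (Dh h a z) ^ β)
    -- the global trajectory
    (x : ℝ → E n) (x0 : E n) (hx0 : x 0 = x0) (hx0F : x0 ∈ C ∩ {z | A.mulVec z = b})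
    (hmem : ∀ t ∈ Ici (0:ℝ), x t ∈ C ∩ {z | A.mulVec z = b})
    (hode : ∀ t ∈ Ici (0:ℝ), HasDerivAt x (sdVF A Hess (gradient f) (x t)) t) :
    (β = 1 → ∃ K > (0:ℝ), ∀ t : ℝ, 0 < t → Dh h a (x t) ≤ K * Real.exp (-α * t)) ∧
    (1 < β → ∃ K' > (0:ℝ), ∀ t : ℝ, 0 < t → Dh h a (x t) ≤ K' / t ^ (1 / (β - 1))) :=
  stmt12_general A b C hCopen h Hess hhC2 hHess hHpos f hf hBstrict hBlevel hBlim hfconv a hSP α β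
    hα U hU hGC x hmem hode
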